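/- arXiv:1801.02598 — 5 statements merged into one kernel-verified Lean document; each statement's English description precedes it below -/
import Mathlib

section
/- Let X and Y be nonempty subsets of A⁺. If X and Y are prefix codes, then XY and YX are prefix codes and the products XY and YX are unambiguous; if moreover X and Y are maximal prefix codes, then XY and YX are maximal prefix codes. -/
open List

/-- The (catenation) product `XY` of two languages. -/
def ProdL {A : Type*} (X Y : Set (List A)) : Set (List A) :=
  {z | ∃ x ∈ X, ∃ y ∈ Y, z = x ++ y}

/-- The product `XY` is unambiguous. -/
def Unamb {A : Type*} (X Y : Set (List A)) : Prop :=
  ∀ x₁ ∈ X, ∀ y₁ ∈ Y, ∀ x₂ ∈ X, ∀ y₂ ∈ Y,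
    x₁ ++ y₁ = x₂ ++ y₂ → x₁ = x₂ ∧ y₁ = y₂

/-- `X ⊆ A⁺` is a code: any equality of two (nonempty) factorizations over `X`
forces the factorizations to coincide. -/
def IsCode {A : Type*} (X : Set (List A)) : Prop :=
  ([] : List A) ∉ X ∧
  ∀ xs ys : List (List A), xs ≠ [] → ys ≠ [] →
    (∀ w ∈ xs, w ∈ X) → (∀ w ∈ ys, w ∈ X) → xs.flatten = ys.flatten → xs = ys

/-- `us` is an alternative factorization on `(X, Y)`: it has length at least 2,
its words lie in `X ∪ Y`, and consecutive words alternate between `X` and `Y`. -/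
def IsAltFact {A : Type*} (X Y : Set (List A)) (us : List (List A)) : Prop :=
  2 ≤ us.length ∧ (∀ w ∈ us, w ∈ X ∪ Y) ∧
  us.Chain' (fun u v => (u ∈ X → v ∈ Y) ∧ (u ∈ Y → v ∈ X))

/-- Two alternative factorizations are similar: they begin with words in the same
set (`X` or `Y`) and they end with words in the same set. -/
def SimilarFact {A : Type*} (X Y : Set (List A)) (us vs : List (List A)) : Prop :=
  (∀ u ∈ us.head?, ∀ v ∈ vs.head?, (u ∈ X ∧ v ∈ X) ∨ (u ∈ Y ∧ v ∈ Y)) ∧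
  (∀ u ∈ us.getLast?, ∀ v ∈ vs.getLast?, (u ∈ X ∧ v ∈ X) ∨ (u ∈ Y ∧ v ∈ Y))

/-- `(X, Y)` is an alternative code: `X, Y` are nonempty subsets of `A⁺` and no
word admits two different similar alternative factorizations on `(X, Y)`. -/
def IsAltCode {A : Type*} (X Y : Set (List A)) : Prop :=
  X.Nonempty ∧ Y.Nonempty ∧ ([] : List A) ∉ X ∧ ([] : List A) ∉ Y ∧
  ∀ us vs : List (List A), IsAltFact X Y us → IsAltFact X Y vs →
    SimilarFact X Y us vs → us.flatten = vs.flatten → us = vs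

/-- `Z` is an alt-induced code: `Z = XY` for some alternative code `(X, Y)`. -/
def IsAltInduced {A : Type*} (Z : Set (List A)) : Prop :=
  ∃ X Y : Set (List A), IsAltCode X Y ∧ Z = ProdL X Y

/-- `X ⊆ A⁺` is a prefix code: no word of `X` is a proper prefix of another word of `X`. -/
def IsPrefixCode {A : Type*} (X : Set (List A)) : Prop :=
  ([] : List A) ∉ X ∧ ∀ u ∈ X, ∀ v ∈ X, u <+: v → u = v

/-- `X ⊆ A⁺` is a suffix code: no word of `X` is a proper suffix of another word of `X`. -/
def IsSuffixCode {A : Type*} (X : Set (List A)) : Prop :=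
  ([] : List A) ∉ X ∧ ∀ u ∈ X, ∀ v ∈ X, u <:+ v → u = v

/-- A bifix code is both a prefix code and a suffix code. -/
def IsBifixCode {A : Type*} (X : Set (List A)) : Prop :=
  IsPrefixCode X ∧ IsSuffixCode X

/-- A maximal prefix code: a prefix code not properly contained in another prefix code. -/
def IsMaximalPrefixCode {A : Type*} (X : Set (List A)) : Prop :=
  IsPrefixCode X ∧ ∀ X' : Set (List A), IsPrefixCode X' → X ⊆ X' → X = X'

/-- A maximal suffix code: a suffix code not properly contained in another suffix code. -/
def IsMaximalSuffixCode {A : Type*} (X : Set (List A)) : Prop :=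
  IsSuffixCode X ∧ ∀ X' : Set (List A), IsSuffixCode X' → X ⊆ X' → X = X'

/-- A maximal bifix code: a bifix code not properly contained in another bifix code. -/
def IsMaximalBifixCode {A : Type*} (X : Set (List A)) : Prop :=
  IsBifixCode X ∧ ∀ X' : Set (List A), IsBifixCode X' → X ⊆ X' → X = X'

/-- `X` is thin: some word `w` is not a factor (infix) of any word of `X`. -/
def IsThin {A : Type*} (X : Set (List A)) : Prop :=
  ∃ w : List A, ∀ u v : List A, u ++ w ++ v ∉ X

/-- The left quotient `X⁻¹Y = {u | ∃ x ∈ X, xu ∈ Y}`. -/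
def lQuot {A : Type*} (X Y : Set (List A)) : Set (List A) :=
  {u | ∃ x ∈ X, x ++ u ∈ Y}

/-- The right quotient `XY⁻¹ = {u | ∃ y ∈ Y, uy ∈ X}`. -/
def rQuot {A : Type*} (X Y : Set (List A)) : Set (List A) :=
  {u | ∃ y ∈ Y, u ++ y ∈ X}

/-- `(X, Y)` is a strong alternative code: an alternative code with
`X⁻¹(XY) ⊆ Y` and `(XY)Y⁻¹ ⊆ X`. -/
def IsStrongAltCode {A : Type*} (X Y : Set (List A)) : Prop :=
  IsAltCode X Y ∧ lQuot X (ProdL X Y) ⊆ Y ∧ rQuot (ProdL X Y) Y ⊆ X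

/-- `Z` is a strong alt-induced code: `Z = XY` for some strong alternative code `(X, Y)`. -/
def IsStrongAltInduced {A : Type*} (Z : Set (List A)) : Prop :=
  ∃ X Y : Set (List A), IsStrongAltCode X Y ∧ Z = ProdL X Y

/-- `Z_a`: the set of words of `Z` beginning with the letter `a`. -/
def Za {A : Type*} (a : A) (Z : Set (List A)) : Set (List A) :=
  {w ∈ Z | w.head? = some a}

/-- A finite code `Z` is of standard form: all its words have length at least 2,
not all of its words begin with the same letter, and not all of its words end
with the same letter. -/
def StandardForm {A : Type*} (Z : Set (List A)) : Prop :=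
  (∀ w ∈ Z, 2 ≤ w.length) ∧
  ¬ (∃ a : A, ∀ w ∈ Z, w.head? = some a) ∧
  ¬ (∃ a : A, ∀ w ∈ Z, w.getLast? = some a)


section Aux
variable {A : Type*}

lemma prefix_eq_of_codes {X Y : Set (List A)} (hX : IsPrefixCode X) (hY : IsPrefixCode Y)
    {x₁ y₁ x₂ y₂ : List A} (hx₁ : x₁ ∈ X) (hy₁ : y₁ ∈ Y) (hx₂ : x₂ ∈ X) (hy₂ : y₂ ∈ Y)
    (h : x₁ ++ y₁ <+: x₂ ++ y₂) : x₁ = x₂ ∧ y₁ <+: y₂ := by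
  have h1 : x₁ <+: x₂ ++ y₂ := (List.prefix_append x₁ y₁).trans h
  have h2 : x₂ <+: x₂ ++ y₂ := List.prefix_append x₂ y₂
  have hx : x₁ = x₂ := by
    rcases List.prefix_or_prefix_of_prefix h1 h2 with hp | hp
    · exact hX.2 x₁ hx₁ x₂ hx₂ hp
    · exact (hX.2 x₂ hx₂ x₁ hx₁ hp).symm
  subst hx
  refine ⟨rfl, ?_⟩
  rcases h with ⟨t, ht⟩
  rw [List.append_assoc] at ht
  exact ⟨t, List.append_cancel_left ht⟩

lemma prefixCode_prod {X Y : Set (List A)} (hX : IsPrefixCode X) (hY : IsPrefixCode Y) :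
    IsPrefixCode (ProdL X Y) ∧ Unamb X Y := by
  constructor
  · constructor
    · rintro ⟨x, hx, y, hy, h⟩
      rcases List.append_eq_nil_iff.mp h.symm with ⟨h1, _⟩
      exact hX.1 (h1 ▸ hx)
    · rintro u ⟨x₁, hx₁, y₁, hy₁, rfl⟩ v ⟨x₂, hx₂, y₂, hy₂, rfl⟩ h
      obtain ⟨hx, hy⟩ := prefix_eq_of_codes hX hY hx₁ hy₁ hx₂ hy₂ h
      rw [hx, hY.2 y₁ hy₁ y₂ hy₂ hy]
  · intro x₁ hx₁ y₁ hy₁ x₂ hx₂ y₂ hy₂ h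
    obtain ⟨hx, _⟩ := prefix_eq_of_codes hX hY hx₁ hy₁ hx₂ hy₂ (h ▸ List.prefix_rfl)
    subst hx
    exact ⟨rfl, List.append_cancel_left h⟩

lemma maxChar {X : Set (List A)} (hX : IsMaximalPrefixCode X) (w : List A) (hw : w ≠ []) :
    (∃ x ∈ X, x <+: w) ∨ (∃ x ∈ X, w <+: x) := by
  by_contra hc
  push_neg at hc
  obtain ⟨h1, h2⟩ := hc
  have hPC : IsPrefixCode (X ∪ {w}) := by
    constructor
    · rintro (h | h)
      · exact hX.1.1 h
      · exact hw (Set.mem_singleton_iff.mp h).symm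
    · rintro u (hu | hu) v (hv | hv) hp
      · exact hX.1.2 u hu v hv hp
      · rw [Set.mem_singleton_iff.mp hv] at hp ⊢; exact absurd hp (h1 u hu)
      · rw [Set.mem_singleton_iff.mp hu] at hp ⊢; exact absurd hp (h2 v hv)
      · rw [Set.mem_singleton_iff.mp hu, Set.mem_singleton_iff.mp hv]
  have := hX.2 (X ∪ {w}) hPC Set.subset_union_left
  have hwX : w ∈ X := this ▸ Set.mem_union_right X rfl
  exact h1 w hwX List.prefix_rfl

lemma maxProd {X Y : Set (List A)} (hX : IsMaximalPrefixCode X) (hY : IsMaximalPrefixCode Y)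
    (hXne : X.Nonempty) (hYne : Y.Nonempty) : IsMaximalPrefixCode (ProdL X Y) := by
  have hPC := (prefixCode_prod hX.1 hY.1).1
  refine ⟨hPC, fun Z' hZ' hsub => ?_⟩
  apply Set.Subset.antisymm hsub
  intro z hz
  have hzne : z ≠ [] := fun h => hZ'.1 (h ▸ hz)
  have key : ∀ x ∈ X, ∀ y ∈ Y, z <+: x ++ y → z ∈ ProdL X Y := by
    intro x hx y hy hp
    have hmem : x ++ y ∈ Z' := hsub ⟨x, hx, y, hy, rfl⟩
    have := hZ'.2 z hz (x ++ y) hmem hp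
    exact this ▸ ⟨x, hx, y, hy, rfl⟩
  rcases maxChar hX z hzne with ⟨x, hx, t, rfl⟩ | ⟨x, hx, hp⟩
  · by_cases ht : t = []
    · subst ht
      obtain ⟨y, hy⟩ := hYne
      exact key x hx y hy ⟨y, by simp⟩
    · rcases maxChar hY t ht with ⟨y, hy, hp⟩ | ⟨y, hy, hp⟩
      · have hmem : x ++ y ∈ Z' := hsub ⟨x, hx, y, hy, rfl⟩
        have hpp : x ++ y <+: x ++ t := by
          rcases hp with ⟨s, rfl⟩; exact ⟨s, by rw [List.append_assoc]⟩
        have := hZ'.2 (x ++ y) hmem (x ++ t) hz hpp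
        exact this ▸ ⟨x, hx, y, hy, rfl⟩
      · exact key x hx y hy (by rcases hp with ⟨s, rfl⟩; exact ⟨s, by rw [List.append_assoc]⟩)
  · obtain ⟨y, hy⟩ := hYne
    exact key x hx y hy (hp.trans (List.prefix_append x y))

end Aux

/-- If `X` and `Y` are prefix codes, then `XY` and `YX` are prefix codes and the
products `XY` and `YX` are unambiguous; if moreover `X` and `Y` are maximal prefix
codes, then `XY` and `YX` are maximal prefix codes. -/
theorem stmt5 {A : Type*} [Fintype A] [Nonempty A]
    (X Y : Set (List A)) (hX : X.Nonempty) (hY : Y.Nonempty)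
    (hXe : ([] : List A) ∉ X) (hYe : ([] : List A) ∉ Y) :
    (IsPrefixCode X → IsPrefixCode Y →
      IsPrefixCode (ProdL X Y) ∧ IsPrefixCode (ProdL Y X) ∧ Unamb X Y ∧ Unamb Y X) ∧
    (IsMaximalPrefixCode X → IsMaximalPrefixCode Y →
      IsMaximalPrefixCode (ProdL X Y) ∧ IsMaximalPrefixCode (ProdL Y X)) := by
  constructor
  · intro hXp hYp
    obtain ⟨h1, h2⟩ := prefixCode_prod hXp hYp
    obtain ⟨h3, h4⟩ := prefixCode_prod hYp hXp
    exact ⟨h1, h3, h2, h4⟩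
  · intro hXm hYm
    exact ⟨maxProd hXm hYm hX hY, maxProd hYm hXm hY hX⟩
end

section
/- Let X and Y be nonempty subsets of A⁺. If X and Y are suffix codes, then XY and YX are suffix codes and the products XY and YX are unambiguous; if moreover X and Y are maximal suffix codes, then XY and YX are maximal suffix codes. -/
open List

private lemma suff_cancel {A : Type*} {x₁ x₂ y : List A}
    (h : (x₁ ++ y) <:+ (x₂ ++ y)) : x₁ <:+ x₂ := by
  obtain ⟨t, ht⟩ := h
  exact ⟨t, List.append_cancel_right (by rwa [← List.append_assoc] at ht)⟩

private lemma prod_suffix_code {A : Type*} {X Y : Set (List A)}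
    (hXs : IsSuffixCode X) (hYs : IsSuffixCode Y) :
    IsSuffixCode (ProdL X Y) ∧ Unamb X Y := by
  constructor
  · constructor
    · rintro ⟨x, hx, y, hy, h⟩
      obtain ⟨hx0, hy0⟩ := List.append_eq_nil_iff.mp h.symm
      exact hXs.1 (hx0 ▸ hx)
    · rintro u ⟨x₁, hx₁, y₁, hy₁, rfl⟩ v ⟨x₂, hx₂, y₂, hy₂, rfl⟩ huv
      have hy1v : y₁ <:+ x₂ ++ y₂ := (List.suffix_append x₁ y₁).trans huv
      have hy2v : y₂ <:+ x₂ ++ y₂ := List.suffix_append x₂ y₂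
      have hy12 : y₁ = y₂ := by
        rcases List.suffix_or_suffix_of_suffix hy1v hy2v with h | h
        · exact hYs.2 _ hy₁ _ hy₂ h
        · exact (hYs.2 _ hy₂ _ hy₁ h).symm
      subst hy12
      have hx12 : x₁ = x₂ := hXs.2 _ hx₁ _ hx₂ (suff_cancel huv)
      rw [hx12]
  · intro x₁ hx₁ y₁ hy₁ x₂ hx₂ y₂ hy₂ h
    have hy1v : y₁ <:+ x₂ ++ y₂ := h ▸ List.suffix_append x₁ y₁
    have hy2v : y₂ <:+ x₂ ++ y₂ := List.suffix_append x₂ y₂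
    have hy12 : y₁ = y₂ := by
      rcases List.suffix_or_suffix_of_suffix hy1v hy2v with h' | h'
      · exact hYs.2 _ hy₁ _ hy₂ h'
      · exact (hYs.2 _ hy₂ _ hy₁ h').symm
    subst hy12
    exact ⟨List.append_cancel_right h, rfl⟩

/-- Suffix-completeness: every nonempty word is suffix-comparable to a word of `X`. -/
private def SuffComplete {A : Type*} (X : Set (List A)) : Prop :=
  ∀ w : List A, w ≠ [] → ∃ x ∈ X, x <:+ w ∨ w <:+ x

private lemma max_iff_complete {A : Type*} {X : Set (List A)} (hXs : IsSuffixCode X) :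
    IsMaximalSuffixCode X ↔ SuffComplete X := by
  constructor
  · intro hmax w hw
    by_contra hcon
    push_neg at hcon
    have hwX : w ∉ X := fun h => (hcon w h).1 (List.suffix_refl w)
    have hcode : IsSuffixCode (X ∪ {w}) := by
      constructor
      · rintro (h | h)
        · exact hXs.1 h
        · exact hw (Set.mem_singleton_iff.mp h).symm
      · rintro u (hu | hu) v (hv | hv) huv
        · exact hXs.2 _ hu _ hv huv
        · rw [Set.mem_singleton_iff.mp hv] at huv ⊢
          exact absurd huv (hcon u hu).1
        · rw [Set.mem_singleton_iff.mp hu] at huv ⊢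
          exact absurd huv (hcon v hv).2
        · rw [Set.mem_singleton_iff.mp hu, Set.mem_singleton_iff.mp hv]
    have := hmax.2 _ hcode Set.subset_union_left
    exact hwX (this ▸ Set.mem_union_right X rfl)
  · intro hcomp
    refine ⟨hXs, fun Z hZ hXZ => Set.Subset.antisymm hXZ fun z hz => ?_⟩
    have hz0 : z ≠ [] := fun h => hZ.1 (h ▸ hz)
    obtain ⟨x, hx, hcmp⟩ := hcomp z hz0
    rcases hcmp with h | h
    · exact (hZ.2 _ (hXZ hx) _ hz h) ▸ hx
    · exact (hZ.2 _ hz _ (hXZ hx) h).symm ▸ hx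

private lemma prod_complete {A : Type*} {X Y : Set (List A)} (hX : X.Nonempty)
    (hXc : SuffComplete X) (hYc : SuffComplete Y) : SuffComplete (ProdL X Y) := by
  intro w hw
  obtain ⟨x₀, hx₀⟩ := hX
  obtain ⟨y, hy, hcy⟩ := hYc w hw
  rcases hcy with hyw | hwy
  · -- y <:+ w : w = u ++ y
    obtain ⟨u, rfl⟩ := hyw
    rcases eq_or_ne u [] with rfl | hu
    · exact ⟨x₀ ++ y, ⟨x₀, hx₀, y, hy, rfl⟩, Or.inr ⟨x₀, by simp⟩⟩
    · obtain ⟨x, hx, hcx⟩ := hXc u hu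
      rcases hcx with hxu | hux
      · obtain ⟨v, rfl⟩ := hxu
        exact ⟨x ++ y, ⟨x, hx, y, hy, rfl⟩, Or.inl ⟨v, by simp⟩⟩
      · obtain ⟨v, rfl⟩ := hux
        exact ⟨(v ++ u) ++ y, ⟨v ++ u, hx, y, hy, rfl⟩, Or.inr ⟨v, by simp⟩⟩
  · obtain ⟨v, rfl⟩ := hwy
    exact ⟨x₀ ++ (v ++ w), ⟨x₀, hx₀, v ++ w, hy, rfl⟩, Or.inr ⟨x₀ ++ v, by simp⟩⟩

/-- If `X` and `Y` are suffix codes, then `XY` and `YX` are suffix codes and the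
products `XY` and `YX` are unambiguous; if moreover `X` and `Y` are maximal suffix
codes, then `XY` and `YX` are maximal suffix codes. -/
theorem stmt6 {A : Type*} [Fintype A] [Nonempty A]
    (X Y : Set (List A)) (hX : X.Nonempty) (hY : Y.Nonempty)
    (hXe : ([] : List A) ∉ X) (hYe : ([] : List A) ∉ Y) :
    (IsSuffixCode X → IsSuffixCode Y →
      IsSuffixCode (ProdL X Y) ∧ IsSuffixCode (ProdL Y X) ∧ Unamb X Y ∧ Unamb Y X) ∧
    (IsMaximalSuffixCode X → IsMaximalSuffixCode Y →
      IsMaximalSuffixCode (ProdL X Y) ∧ IsMaximalSuffixCode (ProdL Y X)) := by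
  constructor
  · intro hXs hYs
    obtain ⟨h1, h3⟩ := prod_suffix_code hXs hYs
    obtain ⟨h2, h4⟩ := prod_suffix_code hYs hXs
    exact ⟨h1, h2, h3, h4⟩
  · intro hXm hYm
    have hXc := (max_iff_complete hXm.1).mp hXm
    have hYc := (max_iff_complete hYm.1).mp hYm
    constructor
    · exact (max_iff_complete (prod_suffix_code hXm.1 hYm.1).1).mpr
        (prod_complete hX hXc hYc)
    · exact (max_iff_complete (prod_suffix_code hYm.1 hXm.1).1).mpr
        (prod_complete hY hYc hXc)
end

section
/- Let X and Y be nonempty subsets of A⁺. If X and Y are bifix codes, then XY and YX are bifix codes and the products XY and YX are unambiguous; if moreover X and Y are maximal bifix codes and thin, then XY and YX are maximal bifix codes and thin. -/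
open List

/-!
A thin maximal bifix code `X` is right complete. Maximality alone makes `X` right or left
complete: otherwise, for `u` prefix-incomparable and `v` suffix-incomparable with every word of
`X`, the word `uv` could be added to `X`. A thin left complete prefix code is right complete by
counting words of length `n`: rotating `rx` to `xr` shows that at least as many of them have a
prefix in `X` as a suffix in `X`, so if some `u` were prefix-incomparable with `X`, at least
`|A|^(n - |u|)` words of length `n` would avoid a word `w` that is not a factor of `X`, whereas
only `(|A|^|w| - 1)^m` words of length `|w| m` do.
Right completeness passes from `X` and `Y` to `XY`, and a right complete bifix code is maximal.
-/

open Filter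
open scoped Finset

/-- Equivalently, `uA* ∩ XA* ≠ ∅` for every word `u`. -/
def IsRightComplete {A : Type*} (X : Set (List A)) : Prop :=
  ∀ u, ∃ x ∈ X, x <+: u ∨ u <+: x

def IsLeftComplete {A : Type*} (X : Set (List A)) : Prop :=
  ∀ u, ∃ x ∈ X, x <:+ u ∨ u <:+ x

section

variable {A : Type*} {X Y : Set (List A)}

theorem IsPrefixCode.eq_of_prefix (hX : IsPrefixCode X) {x₁ x₂ z : List A}
    (h₁ : x₁ ∈ X) (h₂ : x₂ ∈ X) (hz₁ : x₁ <+: z) (hz₂ : x₂ <+: z) : x₁ = x₂ :=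
  (prefix_or_prefix_of_prefix hz₁ hz₂).elim (hX.2 _ h₁ _ h₂) fun h => (hX.2 _ h₂ _ h₁ h).symm

theorem IsSuffixCode.eq_of_suffix (hX : IsSuffixCode X) {x₁ x₂ z : List A}
    (h₁ : x₁ ∈ X) (h₂ : x₂ ∈ X) (hz₁ : x₁ <:+ z) (hz₂ : x₂ <:+ z) : x₁ = x₂ :=
  (suffix_or_suffix_of_suffix hz₁ hz₂).elim (hX.2 _ h₁ _ h₂) fun h => (hX.2 _ h₂ _ h₁ h).symm

theorem IsPrefixCode.unamb (hX : IsPrefixCode X) : Unamb X Y := by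
  intro x₁ hx₁ y₁ _ x₂ hx₂ y₂ _ h
  obtain rfl := hX.eq_of_prefix hx₁ hx₂ (h ▸ prefix_append x₁ y₁) (prefix_append x₂ y₂)
  exact ⟨rfl, append_cancel_left h⟩

theorem nil_notMem_prodL (hX : [] ∉ X) : [] ∉ ProdL X Y := by
  rintro ⟨x, hx, y, -, h⟩
  exact hX ((append_eq_nil_iff.mp h.symm).1 ▸ hx)

theorem IsPrefixCode.prodL (hX : IsPrefixCode X) (hY : IsPrefixCode Y) :
    IsPrefixCode (ProdL X Y) := by
  refine ⟨nil_notMem_prodL hX.1, ?_⟩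
  rintro _ ⟨x₁, hx₁, y₁, hy₁, rfl⟩ _ ⟨x₂, hx₂, y₂, hy₂, rfl⟩ h
  obtain rfl := hX.eq_of_prefix hx₁ hx₂ ((prefix_append x₁ y₁).trans h) (prefix_append x₂ y₂)
  rw [hY.2 _ hy₁ _ hy₂ ((prefix_append_right_inj x₁).mp h)]

theorem IsSuffixCode.prodL (hX : IsSuffixCode X) (hY : IsSuffixCode Y) :
    IsSuffixCode (ProdL X Y) := by
  refine ⟨nil_notMem_prodL hX.1, ?_⟩
  rintro _ ⟨x₁, hx₁, y₁, hy₁, rfl⟩ _ ⟨x₂, hx₂, y₂, hy₂, rfl⟩ h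
  obtain rfl := hY.eq_of_suffix hy₁ hy₂ ((suffix_append x₁ y₁).trans h) (suffix_append x₂ y₂)
  rw [hX.2 _ hx₁ _ hx₂ (suffix_append_self_iff.mp h)]

theorem IsBifixCode.prodL (hX : IsBifixCode X) (hY : IsBifixCode Y) :
    IsBifixCode (ProdL X Y) :=
  ⟨hX.1.prodL hY.1, hX.2.prodL hY.2⟩

theorem IsThin.prodL (hX : IsThin X) (hY : IsThin Y) : IsThin (ProdL X Y) := by
  obtain ⟨wx, hwx⟩ := hX
  obtain ⟨wy, hwy⟩ := hY
  refine ⟨wx ++ wy, fun u v ⟨x, hx, y, hy, h⟩ => ?_⟩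
  rw [show u ++ (wx ++ wy) ++ v = (u ++ wx) ++ (wy ++ v) by simp, append_eq_append_iff] at h
  rcases h with ⟨r, rfl, -⟩ | ⟨r, -, rfl⟩
  · exact hwx u r hx
  · exact hwy r v (by simpa using hy)

theorem IsRightComplete.nonempty (hX : IsRightComplete X) : X.Nonempty :=
  let ⟨x, hx, _⟩ := hX []
  ⟨x, hx⟩

theorem IsRightComplete.prodL (hX : IsRightComplete X) (hY : IsRightComplete Y) :
    IsRightComplete (ProdL X Y) := by
  intro u
  obtain ⟨x, hx, ⟨u', rfl⟩ | hux⟩ := hX u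
  · obtain ⟨y, hy, h⟩ := hY u'
    exact ⟨x ++ y, ⟨x, hx, y, hy, rfl⟩, by simpa only [prefix_append_right_inj] using h⟩
  · obtain ⟨y, hy⟩ := hY.nonempty
    exact ⟨x ++ y, ⟨x, hx, y, hy, rfl⟩, Or.inr (hux.trans (prefix_append x y))⟩

theorem IsBifixCode.isMaximalBifixCode_of_isRightComplete (hX : IsBifixCode X)
    (hc : IsRightComplete X) : IsMaximalBifixCode X := by
  refine ⟨hX, fun X' hX' hXX' => hXX'.antisymm fun u hu => ?_⟩
  obtain ⟨x, hx, h | h⟩ := hc u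
  · exact hX'.1.2 _ (hXX' hx) _ hu h ▸ hx
  · exact (hX'.1.2 _ hu _ (hXX' hx) h).symm ▸ hx

theorem IsPrefixCode.insert (hX : IsPrefixCode X) {y : List A} (hy : y ≠ [])
    (hyX : ¬ ∃ x ∈ X, x <+: y ∨ y <+: x) : IsPrefixCode (insert y X) := by
  refine ⟨fun h => h.elim (hy ∘ Eq.symm) hX.1, ?_⟩
  rintro u (rfl | hu) v (rfl | hv) h
  · rfl
  · exact absurd ⟨v, hv, Or.inr h⟩ hyX
  · exact absurd ⟨u, hu, Or.inl h⟩ hyX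
  · exact hX.2 u hu v hv h

theorem IsSuffixCode.insert (hX : IsSuffixCode X) {y : List A} (hy : y ≠ [])
    (hyX : ¬ ∃ x ∈ X, x <:+ y ∨ y <:+ x) : IsSuffixCode (insert y X) := by
  refine ⟨fun h => h.elim (hy ∘ Eq.symm) hX.1, ?_⟩
  rintro u (rfl | hu) v (rfl | hv) h
  · rfl
  · exact absurd ⟨v, hv, Or.inr h⟩ hyX
  · exact absurd ⟨u, hu, Or.inl h⟩ hyX
  · exact hX.2 u hu v hv h

theorem IsMaximalBifixCode.isRightComplete_or_isLeftComplete (hmax : IsMaximalBifixCode X)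
    (hne : X.Nonempty) : IsRightComplete X ∨ IsLeftComplete X := by
  by_contra! ⟨hr, hl⟩
  obtain ⟨u, hu⟩ := not_forall.mp hr
  obtain ⟨v, hv⟩ := not_forall.mp hl
  have hu_ne : u ≠ [] := by
    rintro rfl
    obtain ⟨x, hx⟩ := hne
    exact hu ⟨x, hx, Or.inr nil_prefix⟩
  have hp : ¬ ∃ x ∈ X, x <+: u ++ v ∨ u ++ v <+: x := by
    rintro ⟨x, hx, h | h⟩
    · exact hu ⟨x, hx, prefix_or_prefix_of_prefix h (prefix_append u v)⟩
    · exact hu ⟨x, hx, Or.inr ((prefix_append u v).trans h)⟩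
  have hs : ¬ ∃ x ∈ X, x <:+ u ++ v ∨ u ++ v <:+ x := by
    rintro ⟨x, hx, h | h⟩
    · exact hv ⟨x, hx, suffix_or_suffix_of_suffix h (suffix_append u v)⟩
    · exact hv ⟨x, hx, Or.inr ((suffix_append u v).trans h)⟩
  have huv : u ++ v ≠ [] := by simp [hu_ne]
  have hins := hmax.2 _ ⟨hmax.1.1.insert huv hp, hmax.1.2.insert huv hs⟩ (Set.subset_insert _ _)
  exact hp ⟨u ++ v, hins ▸ Set.mem_insert _ _, Or.inl (prefix_refl _)⟩

end

section Counting

open scoped Classical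

variable {A : Type*} [Fintype A] {X : Set (List A)}

def words (A : Type*) [Fintype A] (n : ℕ) : Finset (List A) :=
  Finset.univ.map ⟨List.ofFn (n := n), List.ofFn_injective⟩

@[simp]
theorem mem_words {n : ℕ} {v : List A} : v ∈ words A n ↔ v.length = n := by
  refine ⟨fun h => ?_, fun h => ?_⟩
  · obtain ⟨f, -, rfl⟩ := Finset.mem_map.mp h
    exact length_ofFn
  · subst h
    exact Finset.mem_map.mpr ⟨v.get, Finset.mem_univ _, ofFn_get v⟩

theorem card_words (n : ℕ) : #(words A n) = Fintype.card A ^ n := by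
  simp [words]

theorem IsPrefixCode.card_filter_suffix_le (hX : IsPrefixCode X) (n : ℕ) :
    #{v ∈ words A n | ∃ x ∈ X, x <:+ v} ≤ #{v ∈ words A n | ∃ x ∈ X, x <+: v} := by
  refine Finset.card_le_card_of_forall_subsingleton
    (fun v v' => ∃ x ∈ X, ∃ r, v = r ++ x ∧ v' = x ++ r) (fun v hv => ?_)
    fun v' _ v₁ hv₁ v₂ hv₂ => ?_
  · obtain ⟨hlen, x, hx, r, rfl⟩ := Finset.mem_filter.mp hv
    rw [mem_words, length_append] at hlen
    refine ⟨x ++ r, ?_, x, hx, r, rfl, rfl⟩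
    simp only [Finset.mem_filter, mem_words, length_append]
    exact ⟨by omega, x, hx, prefix_append x r⟩
  · obtain ⟨-, x₁, hx₁, r₁, rfl, h₁⟩ := hv₁
    obtain ⟨-, x₂, hx₂, r₂, rfl, h₂⟩ := hv₂
    obtain rfl := hX.eq_of_prefix hx₁ hx₂ (h₁ ▸ prefix_append _ _) (h₂ ▸ prefix_append _ _)
    rw [append_cancel_left (h₁.symm.trans h₂)]

theorem card_filter_prefix_add_pow_le {u : List A} (hu : ¬ ∃ x ∈ X, x <+: u ∨ u <+: x) {n : ℕ}
    (hn : u.length ≤ n) :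
    #{v ∈ words A n | ∃ x ∈ X, x <+: v} + Fintype.card A ^ (n - u.length) ≤
      Fintype.card A ^ n := by
  have hdisj : Disjoint {v ∈ words A n | ∃ x ∈ X, x <+: v} ((words A (n - u.length)).map
      ⟨(u ++ ·), append_right_injective u⟩) := by
    refine Finset.disjoint_left.mpr fun v hv hv' => ?_
    obtain ⟨t, -, rfl⟩ := Finset.mem_map.mp hv'
    obtain ⟨-, x, hx, hxv⟩ := Finset.mem_filter.mp hv
    exact hu ⟨x, hx, prefix_or_prefix_of_prefix hxv (prefix_append u t)⟩
  rw [← card_words, ← card_words, ← Finset.card_map (s := words A (n - u.length))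
    ⟨(u ++ ·), append_right_injective u⟩, ← Finset.card_union_of_disjoint hdisj]
  refine Finset.card_le_card (Finset.union_subset (Finset.filter_subset _ _) fun v hv => ?_)
  obtain ⟨t, ht, rfl⟩ := Finset.mem_map.mp hv
  rw [mem_words] at ht
  change u ++ t ∈ words A n
  rw [mem_words, length_append, ht]
  omega

/-- A word without a suffix in a left complete `X` is a suffix of a word of `X`, so it cannot
contain a factor `w` forbidden in `X`. -/
theorem IsLeftComplete.pow_le_card_filter_suffix_add (hX : IsLeftComplete X) {w : List A}
    (hw : ∀ x ∈ X, ¬ w <:+: x) (n : ℕ) :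
    Fintype.card A ^ n ≤
      #{v ∈ words A n | ∃ x ∈ X, x <:+ v} + #{v ∈ words A n | ¬ w <:+: v} := by
  rw [← card_words, ← Finset.card_filter_add_card_filter_not (fun v => ∃ x ∈ X, x <:+ v)]
  refine Nat.add_le_add_left (Finset.card_le_card fun v hv => ?_) _
  obtain ⟨hv, hns⟩ := Finset.mem_filter.mp hv
  obtain ⟨x, hx, hxv | hvx⟩ := hX v
  · exact absurd ⟨x, hx, hxv⟩ hns
  · exact Finset.mem_filter.mpr ⟨hv, fun hwv => hw x hx (hwv.trans hvx.isInfix)⟩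

theorem card_filter_not_infix_le (w : List A) (m : ℕ) :
    #{v ∈ words A (w.length * m) | ¬ w <:+: v} ≤ (Fintype.card A ^ w.length - 1) ^ m := by
  induction m with
  | zero => exact (Finset.card_le_card (Finset.filter_subset _ _)).trans (by simp [card_words])
  | succ m ih =>
    have hsub : {v ∈ words A (w.length * (m + 1)) | ¬ w <:+: v} ⊆
        (((words A w.length).erase w) ×ˢ {v ∈ words A (w.length * m) | ¬ w <:+: v}).image
          fun p => p.1 ++ p.2 := by
      intro v hv
      obtain ⟨hlen, hwv⟩ := Finset.mem_filter.mp hv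
      rw [mem_words] at hlen
      refine Finset.mem_image.mpr ⟨(v.take w.length, v.drop w.length), ?_, take_append_drop _ _⟩
      simp only [Finset.mem_product, Finset.mem_erase, Finset.mem_filter, mem_words, length_take,
        length_drop, hlen]
      refine ⟨⟨fun h => hwv ?_, by rw [Nat.mul_succ]; omega⟩, by rw [Nat.mul_succ]; omega,
        fun h => hwv ?_⟩
      · exact h ▸ take_prefix _ _ |>.isInfix
      · exact h.trans (drop_suffix _ _).isInfix
    calc _ ≤ _ := Finset.card_le_card hsub
      _ ≤ _ := Finset.card_image_le
      _ ≤ (Fintype.card A ^ w.length - 1) * (Fintype.card A ^ w.length - 1) ^ m := by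
        rw [Finset.card_product, Finset.card_erase_of_mem (mem_words.mpr rfl), card_words]
        exact Nat.mul_le_mul_left _ ih
      _ = _ := (pow_succ' _ _).symm

theorem eventually_mul_pow_lt_pow (c K : ℕ) : ∀ᶠ m in atTop, c * K ^ m < (K + 1) ^ m := by
  rcases Nat.eq_zero_or_pos K with rfl | hK
  · filter_upwards [eventually_ge_atTop 1] with m hm
    simp [zero_pow (Nat.one_le_iff_ne_zero.mp hm)]
  · have hK' : (0 : ℝ) < K := by exact_mod_cast hK
    have hlim := tendsto_pow_atTop_atTop_of_one_lt (r := ((K + 1 : ℝ) / K))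
      (by rw [one_lt_div hK']; linarith)
    filter_upwards [hlim.eventually_gt_atTop (c : ℝ)] with m hm
    rw [div_pow, lt_div_iff₀ (by positivity)] at hm
    exact_mod_cast hm

theorem IsPrefixCode.isRightComplete_of_isLeftComplete (hX : IsPrefixCode X)
    (hthin : IsThin X) (hl : IsLeftComplete X) : IsRightComplete X := by
  by_contra hr
  obtain ⟨u, hu⟩ := not_forall.mp hr
  obtain ⟨w, hw⟩ := hthin
  have hwX : ∀ x ∈ X, ¬ w <:+: x := fun x hx ⟨s, t, h⟩ => hw s t (h ▸ hx)
  have hw_ne : w ≠ [] := by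
    rintro rfl
    obtain ⟨x, hx, -⟩ := hl []
    exact hwX x hx nil_infix
  have hfree : ∀ n, u.length ≤ n →
      Fintype.card A ^ (n - u.length) ≤ #{v ∈ words A n | ¬ w <:+: v} := by
    intro n hn
    have := hX.card_filter_suffix_le n
    have := card_filter_prefix_add_pow_le hu hn
    have := hl.pow_le_card_filter_suffix_add hwX n
    omega
  set q := Fintype.card A
  set L := w.length
  have hq : 0 < q := Fintype.card_pos_iff.mpr ⟨w.head hw_ne⟩
  have hL : 0 < L := length_pos_iff.mpr hw_ne
  obtain ⟨m, hm, hlt⟩ := ((eventually_ge_atTop u.length).and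
    (eventually_mul_pow_lt_pow (q ^ u.length) (q ^ L - 1))).exists
  have hLm : u.length ≤ L * m := hm.trans (Nat.le_mul_of_pos_left m hL)
  rw [Nat.sub_add_cancel (Nat.one_le_pow _ _ hq), ← pow_mul] at hlt
  refine hlt.not_ge ?_
  calc q ^ (L * m) = q ^ u.length * q ^ (L * m - u.length) := by
        rw [← pow_add, Nat.add_sub_cancel' hLm]
    _ ≤ q ^ u.length * (q ^ L - 1) ^ m :=
        Nat.mul_le_mul_left _ ((hfree _ hLm).trans (card_filter_not_infix_le w m))

theorem IsMaximalBifixCode.isRightComplete (hmax : IsMaximalBifixCode X)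
    (hne : X.Nonempty) (hthin : IsThin X) : IsRightComplete X :=
  (hmax.isRightComplete_or_isLeftComplete hne).elim id
    (hmax.1.1.isRightComplete_of_isLeftComplete hthin)

end Counting

theorem stmt7_general {A : Type*} [Fintype A]
    (X Y : Set (List A)) (hX : X.Nonempty) (hY : Y.Nonempty) :
    (IsBifixCode X → IsBifixCode Y →
      IsBifixCode (ProdL X Y) ∧ IsBifixCode (ProdL Y X) ∧ Unamb X Y ∧ Unamb Y X) ∧
    (IsMaximalBifixCode X → IsThin X → IsMaximalBifixCode Y → IsThin Y →
      IsMaximalBifixCode (ProdL X Y) ∧ IsThin (ProdL X Y) ∧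
      IsMaximalBifixCode (ProdL Y X) ∧ IsThin (ProdL Y X)) := by
  refine ⟨fun hbX hbY => ⟨hbX.prodL hbY, hbY.prodL hbX, hbX.1.unamb, hbY.1.unamb⟩,
    fun hmX htX hmY htY => ?_⟩
  have hcX := hmX.isRightComplete hX htX
  have hcY := hmY.isRightComplete hY htY
  exact ⟨(hmX.1.prodL hmY.1).isMaximalBifixCode_of_isRightComplete (hcX.prodL hcY),
    htX.prodL htY,
    (hmY.1.prodL hmX.1).isMaximalBifixCode_of_isRightComplete (hcY.prodL hcX),
    htY.prodL htX⟩

/-- If `X` and `Y` are bifix codes, then `XY` and `YX` are bifix codes and the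
products `XY` and `YX` are unambiguous; if moreover `X` and `Y` are maximal bifix
codes and thin, then `XY` and `YX` are maximal bifix codes and thin. -/
theorem stmt7 {A : Type*} [Fintype A] [Nonempty A]
    (X Y : Set (List A)) (hX : X.Nonempty) (hY : Y.Nonempty)
    (hXe : ([] : List A) ∉ X) (hYe : ([] : List A) ∉ Y) :
    (IsBifixCode X → IsBifixCode Y →
      IsBifixCode (ProdL X Y) ∧ IsBifixCode (ProdL Y X) ∧ Unamb X Y ∧ Unamb Y X) ∧
    (IsMaximalBifixCode X → IsThin X → IsMaximalBifixCode Y → IsThin Y →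
      IsMaximalBifixCode (ProdL X Y) ∧ IsThin (ProdL X Y) ∧
      IsMaximalBifixCode (ProdL Y X) ∧ IsThin (ProdL Y X)) :=
  stmt7_general X Y hX hY
end

section
/- Let X and Y be nonempty subsets of A⁺. If XY and YX are prefix codes, then X and Y are prefix codes; if XY and YX are maximal prefix codes, then X and Y are maximal prefix codes. -/
open List

lemma pc_of_prod {A : Type*} {X Y : Set (List A)}
    (hXe : ([] : List A) ∉ X) (hY : Y.Nonempty)
    (h : IsPrefixCode (ProdL Y X)) : IsPrefixCode X := by
  refine ⟨hXe, ?_⟩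
  intro u hu v hv huv
  obtain ⟨y, hy⟩ := hY
  have h1 : y ++ u ∈ ProdL Y X := ⟨y, hy, u, hu, rfl⟩
  have h2 : y ++ v ∈ ProdL Y X := ⟨y, hy, v, hv, rfl⟩
  have hp : y ++ u <+: y ++ v := by
    obtain ⟨t, ht⟩ := huv
    exact ⟨t, by rw [List.append_assoc, ht]⟩
  exact List.append_cancel_left (h.2 _ h1 _ h2 hp)

lemma pc_prod {A : Type*} {X Y : Set (List A)}
    (hX : IsPrefixCode X) (hY : IsPrefixCode Y) : IsPrefixCode (ProdL X Y) := by
  constructor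
  · rintro ⟨x, hx, y, hy, hxy⟩
    rcases List.append_eq_nil_iff.mp hxy.symm with ⟨rfl, -⟩
    exact hX.1 hx
  · rintro - ⟨x₁, hx₁, y₁, hy₁, rfl⟩ - ⟨x₂, hx₂, y₂, hy₂, rfl⟩ hp
    have hx1p : x₁ <+: x₂ ++ y₂ := (x₁.prefix_append y₁).trans hp
    rcases List.prefix_or_prefix_of_prefix hx1p (x₂.prefix_append y₂) with h | h
    · rcases hX.2 _ hx₁ _ hx₂ h with rfl
      have : y₁ <+: y₂ := by
        obtain ⟨t, ht⟩ := hp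
        rw [List.append_assoc] at ht
        exact ⟨t, List.append_cancel_left ht⟩
      rcases hY.2 _ hy₁ _ hy₂ this with rfl; rfl
    · obtain rfl : x₂ = x₁ := hX.2 _ hx₂ _ hx₁ h
      have : y₁ <+: y₂ := by
        obtain ⟨t, ht⟩ := hp
        rw [List.append_assoc] at ht
        exact ⟨t, List.append_cancel_left ht⟩
      rcases hY.2 _ hy₁ _ hy₂ this with rfl; rfl

lemma mpc_of_prod {A : Type*} {X Y : Set (List A)}
    (hXpc : IsPrefixCode X) (hYpc : IsPrefixCode Y) (hYne : Y.Nonempty)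
    (h : IsMaximalPrefixCode (ProdL Y X)) : IsMaximalPrefixCode X := by
  refine ⟨hXpc, ?_⟩
  intro X' hX' hsub
  have hsub' : ProdL Y X ⊆ ProdL Y X' := by
    rintro - ⟨y, hy, x, hx, rfl⟩
    exact ⟨y, hy, x, hsub hx, rfl⟩
  have heq : ProdL Y X = ProdL Y X' := h.2 _ (pc_prod hYpc hX') hsub'
  apply Set.Subset.antisymm hsub
  intro w hw
  obtain ⟨y, hy⟩ := hYne
  have : y ++ w ∈ ProdL Y X := heq ▸ ⟨y, hy, w, hw, rfl⟩
  obtain ⟨y', hy', x, hx, hfac⟩ := this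
  have hy'p : y' <+: y ++ w := ⟨x, hfac.symm⟩
  have : y = y' := by
    rcases List.prefix_or_prefix_of_prefix (y.prefix_append w) hy'p with hh | hh
    · exact hYpc.2 _ hy _ hy' hh
    · exact (hYpc.2 _ hy' _ hy hh).symm
  subst this
  rwa [← List.append_cancel_left hfac] at hx

/-- If `XY` and `YX` are prefix codes, then `X` and `Y` are prefix codes; if `XY`
and `YX` are maximal prefix codes, then `X` and `Y` are maximal prefix codes. -/
theorem stmt8 {A : Type*} [Fintype A] [Nonempty A]
    (X Y : Set (List A)) (hX : X.Nonempty) (hY : Y.Nonempty)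
    (hXe : ([] : List A) ∉ X) (hYe : ([] : List A) ∉ Y) :
    (IsPrefixCode (ProdL X Y) → IsPrefixCode (ProdL Y X) →
      IsPrefixCode X ∧ IsPrefixCode Y) ∧
    (IsMaximalPrefixCode (ProdL X Y) → IsMaximalPrefixCode (ProdL Y X) →
      IsMaximalPrefixCode X ∧ IsMaximalPrefixCode Y) := by
  constructor
  · intro hXY hYX
    exact ⟨pc_of_prod hXe hY hYX, pc_of_prod hYe hX hXY⟩
  · intro hXY hYX
    have hXpc := pc_of_prod hXe hY hYX.1
    have hYpc := pc_of_prod hYe hX hXY.1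
    exact ⟨mpc_of_prod hXpc hYpc hY hYX, mpc_of_prod hYpc hXpc hX hXY⟩
end

section
/- If Z ⊆ A⁺ is a regular language and a strong alt-induced code, then the set of pairs (X, Y) of strong alternative codes with XY = Z is finite. -/
open List

/-!
A strong alternative code `(X, Y)` with `XY = Z` is determined by `X`, since `Y = X⁻¹Z`, and
`X = ZY⁻¹` consists of the words `x` whose left quotient `x⁻¹Z` meets `Y`. Hence `X` is a union
of classes of words with the same left quotient of `Z`. By Myhill–Nerode a regular `Z` has only
finitely many left quotients, so there are only finitely many such unions.
-/

section Quotients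

variable {α : Type*}

theorem subset_rQuot_prodL {X Y : Set (List α)} (hY : Y.Nonempty) : X ⊆ rQuot (ProdL X Y) Y :=
  fun x hx => ⟨hY.some, hY.some_mem, x, hx, hY.some, hY.some_mem, rfl⟩

theorem subset_lQuot_prodL {X Y : Set (List α)} (hX : X.Nonempty) : Y ⊆ lQuot X (ProdL X Y) :=
  fun y hy => ⟨hX.some, hX.some_mem, hX.some, hX.some_mem, y, hy, rfl⟩

theorem IsStrongAltCode.eq_rQuot {X Y : Set (List α)} (h : IsStrongAltCode X Y) :
    X = rQuot (ProdL X Y) Y :=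
  (subset_rQuot_prodL h.1.2.1).antisymm h.2.2

theorem IsStrongAltCode.eq_lQuot {X Y : Set (List α)} (h : IsStrongAltCode X Y) :
    Y = lQuot X (ProdL X Y) :=
  (subset_lQuot_prodL h.1.1).antisymm h.2.1

theorem rQuot_eq_preimage_leftQuotient (Z Y : Set (List α)) :
    rQuot Z Y = Language.leftQuotient Z ⁻¹' {L : Language α | ∃ y ∈ Y, y ∈ L} :=
  rfl

theorem finite_setOf_eq_rQuot {Z : Set (List α)}
    (hZ : (Set.range (Language.leftQuotient Z)).Finite) :
    {X : Set (List α) | ∃ Y, X = rQuot Z Y}.Finite := by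
  refine (hZ.finite_subsets.image (Language.leftQuotient Z ⁻¹' ·)).subset ?_
  rintro _ ⟨Y, rfl⟩
  refine ⟨{L : Language α | ∃ y ∈ Y, y ∈ L} ∩ Set.range (Language.leftQuotient Z),
    Set.inter_subset_right, ?_⟩
  exact Set.preimage_inter_range.trans (rQuot_eq_preimage_leftQuotient Z Y).symm

end Quotients

theorem stmt16_general {A : Type*}
    (Z : Set (List A))
    (hreg : Language.IsRegular (Z : Language A)) :
    {p : Set (List A) × Set (List A) |
      IsStrongAltCode p.1 p.2 ∧ Z = ProdL p.1 p.2}.Finite := by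
  refine ((finite_setOf_eq_rQuot hreg.finite_range_leftQuotient).image
    fun X => (X, lQuot X Z)).subset ?_
  rintro ⟨X, Y⟩ ⟨hXY, rfl⟩
  exact ⟨X, ⟨Y, hXY.eq_rQuot⟩, Prod.ext rfl hXY.eq_lQuot.symm⟩

/-- If `Z ⊆ A⁺` is a regular strong alt-induced code, then there are only
finitely many strong alternative codes `(X, Y)` inducing `Z`. -/
theorem stmt16 {A : Type*} [Fintype A] [Nonempty A]
    (Z : Set (List A)) (hZe : ([] : List A) ∉ Z)
    (hreg : Language.IsRegular (Z : Language A))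
    (hZ : IsStrongAltInduced Z) :
    {p : Set (List A) × Set (List A) |
      IsStrongAltCode p.1 p.2 ∧ Z = ProdL p.1 p.2}.Finite :=
  stmt16_general Z hreg
end
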